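/- arXiv:1202.4350 — 2 statements merged into one kernel-verified Lean document; each statement's English description precedes it below -/
import Mathlib

section
/- Let G be a topological group, B ⊆ LUC(G)* a norm-bounded set, m₀ ∈ M(G) (a finite Radon measure viewed as an element of LUC(G)*), and n₀ ∈ B. Then the convolution map (m, n) ↦ m ∗ n from LUC(G)* × B to LUC(G)* is jointly continuous at (m₀, n₀) when all spaces carry the UEB topology; that is, if m_α → m₀ and n_α → n₀ in the UEB topology with n_α ∈ B, then m_α ∗ n_α → m₀ ∗ n₀ in the UEB topology. -/
noncomputable section
set_option linter.unusedSectionVars false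

open Filter Topology MeasureTheory BoundedContinuousFunction

section Defs

variable (G : Type*) [Group G] [TopologicalSpace G] [IsTopologicalGroup G]

/-- A bounded left uniformly continuous function on a topological group. -/
def IsLUCFun (f : G → ℂ) : Prop :=
  (∃ C, ∀ s, ‖f s‖ ≤ C) ∧
    ∀ ε > 0, ∃ U ∈ 𝓝 (1 : G), ∀ s t : G, s * t⁻¹ ∈ U → ‖f s - f t‖ < ε

/-- A set of functions is equi-LUC if it is uniformly bounded in the sup norm and
equi-uniformly continuous for the right uniformity. -/
def EquiLUCFun (F : Set (G → ℂ)) : Prop :=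
  (∃ C, ∀ f ∈ F, ∀ s, ‖f s‖ ≤ C) ∧
    ∀ ε > 0, ∃ U ∈ 𝓝 (1 : G), ∀ f ∈ F, ∀ s t : G, s * t⁻¹ ∈ U → ‖f s - f t‖ < ε

/-- A SIN group: there is a base of neighbourhoods of the identity that are
invariant under all inner automorphisms. -/
def IsSIN : Prop :=
  ∀ U ∈ 𝓝 (1 : G), ∃ V ∈ 𝓝 (1 : G), V ⊆ U ∧ ∀ x : G, ∀ v ∈ V, x * v * x⁻¹ ∈ V

end Defs

section LUCSpace

variable (G : Type*) [Group G] [TopologicalSpace G] [IsTopologicalGroup G]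

/-- The space `LUC(G)` of bounded left uniformly continuous complex functions on `G`,
as a subspace of the bounded continuous functions with the sup norm. -/
def LUC : Submodule ℂ (G →ᵇ ℂ) where
  carrier := {f | ∀ ε > 0, ∃ U ∈ 𝓝 (1 : G), ∀ s t : G, s * t⁻¹ ∈ U → ‖f s - f t‖ < ε}
  zero_mem' := fun ε hε => ⟨Set.univ, Filter.univ_mem, fun s t _ => by simpa using hε⟩
  add_mem' := by
    intro f g hf hg ε hε
    obtain ⟨U, hU, hUf⟩ := hf (ε / 2) (by linarith)
    obtain ⟨V, hV, hVg⟩ := hg (ε / 2) (by linarith)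
    refine ⟨U ∩ V, Filter.inter_mem hU hV, fun s t hst => ?_⟩
    have h1 := hUf s t hst.1
    have h2 := hVg s t hst.2
    have e : (f + g) s - (f + g) t = (f s - f t) + (g s - g t) := by
      simp only [BoundedContinuousFunction.coe_add, Pi.add_apply]; ring
    calc ‖(f + g) s - (f + g) t‖ ≤ ‖f s - f t‖ + ‖g s - g t‖ := by
          rw [e]; exact norm_add_le _ _
      _ < ε := by linarith
  smul_mem' := by
    intro c f hf ε hε
    obtain ⟨U, hU, hUf⟩ := hf (ε / (‖c‖ + 1)) (by positivity)
    refine ⟨U, hU, fun s t hst => ?_⟩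
    have h := hUf s t hst
    have e : (c • f) s - (c • f) t = c * (f s - f t) := by
      simp only [BoundedContinuousFunction.coe_smul, Pi.smul_apply, smul_eq_mul]; ring
    rw [e, norm_mul]
    calc ‖c‖ * ‖f s - f t‖ ≤ ‖c‖ * (ε / (‖c‖ + 1)) :=
          mul_le_mul_of_nonneg_left h.le (norm_nonneg c)
      _ < (‖c‖ + 1) * (ε / (‖c‖ + 1)) :=
          mul_lt_mul_of_pos_right (by linarith) (by positivity)
      _ = ε := by field_simp

/-- Equi-LUC subsets of the space `LUC(G)`. -/
def EquiLUC (F : Set ↥(LUC G)) : Prop :=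
  (∃ C, ∀ f ∈ F, ‖f‖ ≤ C) ∧
    ∀ ε > 0, ∃ U ∈ 𝓝 (1 : G), ∀ f ∈ F, ∀ s t : G,
      s * t⁻¹ ∈ U → ‖(f : G →ᵇ ℂ) s - (f : G →ᵇ ℂ) t‖ < ε

variable {G}

lemma lTrans_mem (s : G) {f : G →ᵇ ℂ} (hf : f ∈ LUC G) :
    f.compContinuous ⟨fun x => s * x, by continuity⟩ ∈ LUC G := by
  intro ε hε
  obtain ⟨U, hU, hUf⟩ := hf ε hε
  refine ⟨(fun u => s * u * s⁻¹) ⁻¹' U, ?_, ?_⟩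
  · have hc : ContinuousAt (fun u : G => s * u * s⁻¹) 1 := by fun_prop
    exact hc.preimage_mem_nhds (by simpa using hU)
  · intro x y hxy
    have h' : (s * x) * (s * y)⁻¹ ∈ U := by
      have h'' : s * (x * y⁻¹) * s⁻¹ ∈ U := hxy
      simpa [mul_inv_rev, mul_assoc] using h''
    exact hUf (s * x) (s * y) h'

/-- Left translation `ℓ_s f (x) = f (s x)` on `LUC(G)`. -/
def lTrans (s : G) (f : ↥(LUC G)) : ↥(LUC G) :=
  ⟨(f : G →ᵇ ℂ).compContinuous ⟨fun x => s * x, by continuity⟩, lTrans_mem s f.2⟩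

@[simp] lemma lTrans_apply (s : G) (f : ↥(LUC G)) (x : G) :
    ((lTrans s f : ↥(LUC G)) : G →ᵇ ℂ) x = (f : G →ᵇ ℂ) (s * x) := rfl

variable (G) in
/-- The dual Banach space `LUC(G)*`. -/
abbrev LUCDual := StrongDual ℂ ↥(LUC G)

lemma lTrans_norm_le (s : G) (f : ↥(LUC G)) : ‖lTrans s f‖ ≤ ‖f‖ :=
  BoundedContinuousFunction.norm_compContinuous_le _ _

lemma lTrans_add (s : G) (f g : ↥(LUC G)) :
    lTrans s (f + g) = lTrans s f + lTrans s g := by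
  apply Subtype.ext; ext x; rfl

lemma lTrans_smul (s : G) (c : ℂ) (f : ↥(LUC G)) :
    lTrans s (c • f) = c • lTrans s f := by
  apply Subtype.ext; ext x; rfl

lemma luccond_continuous {g : G → ℂ}
    (h : ∀ ε > 0, ∃ U ∈ 𝓝 (1 : G), ∀ s t : G, s * t⁻¹ ∈ U → ‖g s - g t‖ < ε) :
    Continuous g := by
  rw [continuous_iff_continuousAt]
  intro t
  rw [ContinuousAt, Metric.tendsto_nhds]
  intro ε hε
  obtain ⟨U, hU, hUf⟩ := h ε hε
  have hmem : {s : G | s * t⁻¹ ∈ U} ∈ 𝓝 t := by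
    have hc : ContinuousAt (fun s : G => s * t⁻¹) t := by fun_prop
    exact hc.preimage_mem_nhds (by simpa using hU)
  filter_upwards [hmem] with s hs
  rw [dist_eq_norm]
  exact hUf s t hs

lemma rAct_cond (n : LUCDual G) (f : ↥(LUC G)) :
    ∀ ε > 0, ∃ U ∈ 𝓝 (1 : G), ∀ s t : G, s * t⁻¹ ∈ U →
      ‖n (lTrans s f) - n (lTrans t f)‖ < ε := by
  intro ε hε
  set δ := ε / (2 * (‖n‖ + 1)) with hδdef
  have hδ : 0 < δ := by positivity
  obtain ⟨U, hU, hUf⟩ := f.2 δ hδ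
  refine ⟨U, hU, fun s t hst => ?_⟩
  have hdiff : ‖lTrans s f - lTrans t f‖ ≤ δ := by
    have : ‖((lTrans s f : ↥(LUC G)) : G →ᵇ ℂ) - ((lTrans t f : ↥(LUC G)) : G →ᵇ ℂ)‖ ≤ δ := by
      apply BoundedContinuousFunction.norm_le hδ.le |>.2
      intro x
      have hx : (s * x) * (t * x)⁻¹ ∈ U := by
        simpa [mul_inv_rev, mul_assoc] using hst
      simpa using (hUf (s * x) (t * x) hx).le
    exact this
  calc ‖n (lTrans s f) - n (lTrans t f)‖ = ‖n (lTrans s f - lTrans t f)‖ := by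
        rw [map_sub]
    _ ≤ ‖n‖ * ‖lTrans s f - lTrans t f‖ := n.le_opNorm _
    _ ≤ ‖n‖ * δ := mul_le_mul_of_nonneg_left hdiff (norm_nonneg n)
    _ < (‖n‖ + 1) * δ := mul_lt_mul_of_pos_right (by linarith) hδ
    _ = ε / 2 := by rw [hδdef]; field_simp
    _ < ε := by linarith

/-- The function `r_n f : s ↦ n (ℓ_s f)`, as an element of `LUC(G)`. -/
def rAct (n : LUCDual G) (f : ↥(LUC G)) : ↥(LUC G) :=
  ⟨BoundedContinuousFunction.ofNormedAddCommGroup (fun s => n (lTrans s f))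
      (luccond_continuous (rAct_cond n f))
      (‖n‖ * ‖f‖)
      (fun s => by
        calc ‖n (lTrans s f)‖ ≤ ‖n‖ * ‖lTrans s f‖ := n.le_opNorm _
          _ ≤ ‖n‖ * ‖f‖ := mul_le_mul_of_nonneg_left (lTrans_norm_le s f) (norm_nonneg n)),
   fun ε hε => by
      obtain ⟨U, hU, h⟩ := rAct_cond n f ε hε
      exact ⟨U, hU, fun s t hst => h s t hst⟩⟩

@[simp] lemma rAct_apply (n : LUCDual G) (f : ↥(LUC G)) (s : G) :
    ((rAct n f : ↥(LUC G)) : G →ᵇ ℂ) s = n (lTrans s f) := rfl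

lemma rAct_norm_le (n : LUCDual G) (f : ↥(LUC G)) : ‖rAct n f‖ ≤ ‖n‖ * ‖f‖ := by
  have h0 : (0 : ℝ) ≤ ‖n‖ * ‖f‖ := by positivity
  show ‖((rAct n f : ↥(LUC G)) : G →ᵇ ℂ)‖ ≤ ‖n‖ * ‖f‖
  refine (BoundedContinuousFunction.norm_le h0).2 fun s => ?_
  calc ‖n (lTrans s f)‖ ≤ ‖n‖ * ‖lTrans s f‖ := n.le_opNorm _
    _ ≤ ‖n‖ * ‖f‖ := mul_le_mul_of_nonneg_left (lTrans_norm_le s f) (norm_nonneg n)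

lemma rAct_add (n : LUCDual G) (f g : ↥(LUC G)) :
    rAct n (f + g) = rAct n f + rAct n g := by
  apply Subtype.ext
  ext s
  simp [rAct_apply, lTrans_add, map_add]

lemma rAct_smul (n : LUCDual G) (c : ℂ) (f : ↥(LUC G)) :
    rAct n (c • f) = c • rAct n f := by
  apply Subtype.ext
  ext s
  simp [rAct_apply, lTrans_smul, _root_.map_smul]

/-- Convolution on `LUC(G)*`: `(m ∗ n)(f) = m (r_n f)`. -/
def conv (m n : LUCDual G) : LUCDual G :=
  LinearMap.mkContinuous
    { toFun := fun f => m (rAct n f)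
      map_add' := by
        intro f g
        show m (rAct n (f + g)) = m (rAct n f) + m (rAct n g)
        rw [rAct_add, map_add]
      map_smul' := by
        intro c f
        show m (rAct n (c • f)) = c • m (rAct n f)
        rw [rAct_smul, _root_.map_smul] }
    (‖m‖ * ‖n‖)
    (fun f => by
      calc ‖m (rAct n f)‖ ≤ ‖m‖ * ‖rAct n f‖ := m.le_opNorm _
        _ ≤ ‖m‖ * (‖n‖ * ‖f‖) :=
            mul_le_mul_of_nonneg_left (rAct_norm_le n f) (norm_nonneg m)
        _ = ‖m‖ * ‖n‖ * ‖f‖ := by ring)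

@[simp] lemma conv_apply (m n : LUCDual G) (f : ↥(LUC G)) :
    conv m n f = m (rAct n f) := rfl

variable (G) in
/-- Convergence of a net in the UEB topology on `LUC(G)*`:
uniform convergence on every equi-LUC set. -/
def UEBTendsto {ι : Type*} (l : Filter ι) (m : ι → LUCDual G) (m₀ : LUCDual G) : Prop :=
  ∀ F : Set ↥(LUC G), EquiLUC G F → ∀ ε > 0, ∀ᶠ i in l, ∀ f ∈ F, ‖m i f - m₀ f‖ < ε

variable (G) in
/-- The UEB topology on `LUC(G)*`: the topology of uniform convergence
on the equi-LUC subsets of `LUC(G)`. -/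
def UEBTop : TopologicalSpace (LUCDual G) :=
  ⨅ F : {F : Set ↥(LUC G) // EquiLUC G F},
    TopologicalSpace.induced
      (fun m => UniformFun.ofFun (fun f : F.1 => m f.1) : LUCDual G → UniformFun F.1 ℂ)
      inferInstance

end LUCSpace

section MeasureStuff

variable {G : Type*} [Group G] [TopologicalSpace G] [IsTopologicalGroup G]
variable [MeasurableSpace G] [BorelSpace G]

lemma integrable_mul_luc (μ : Measure G) {f : G → ℂ} (hf : Integrable f μ)
    (h : ↥(LUC G)) : Integrable (fun x => f x * (h : G →ᵇ ℂ) x) μ := by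
  have hm : AEStronglyMeasurable (fun x => (h : G →ᵇ ℂ) x) μ :=
    ((h : G →ᵇ ℂ).continuous.aestronglyMeasurable)
  have := hf.bdd_mul hm (Filter.Eventually.of_forall fun x => (h : G →ᵇ ℂ).norm_coe_le_norm x)
  simpa [mul_comm] using this

/-- A function `f ∈ L¹(G,μ)` viewed as the element `h ↦ ∫ f·h dμ` of `LUC(G)*`. -/
def integFunctional (μ : Measure G) (f : G → ℂ) (hf : Integrable f μ) : LUCDual G :=
  LinearMap.mkContinuous
    { toFun := fun h : ↥(LUC G) => ∫ x, f x * (h : G →ᵇ ℂ) x ∂μ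
      map_add' := by
        intro h g
        have : (fun x => f x * ((h + g : ↥(LUC G)) : G →ᵇ ℂ) x)
            = fun x => f x * (h : G →ᵇ ℂ) x + f x * (g : G →ᵇ ℂ) x := by
          funext x
          simp [mul_add]
        show (∫ x, f x * ((h + g : ↥(LUC G)) : G →ᵇ ℂ) x ∂μ)
            = (∫ x, f x * (h : G →ᵇ ℂ) x ∂μ) + ∫ x, f x * (g : G →ᵇ ℂ) x ∂μ
        rw [this, integral_add (integrable_mul_luc μ hf h) (integrable_mul_luc μ hf g)]
      map_smul' := by
        intro c h
        have : (fun x => f x * ((c • h : ↥(LUC G)) : G →ᵇ ℂ) x)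
            = fun x => c • (f x * (h : G →ᵇ ℂ) x) := by
          funext x
          simp [smul_eq_mul]
          ring
        show (∫ x, f x * ((c • h : ↥(LUC G)) : G →ᵇ ℂ) x ∂μ)
            = c • ∫ x, f x * (h : G →ᵇ ℂ) x ∂μ
        rw [this, integral_smul] }
    (∫ x, ‖f x‖ ∂μ)
    (fun h => by
      calc ‖∫ x, f x * (h : G →ᵇ ℂ) x ∂μ‖ ≤ ∫ x, ‖f x * (h : G →ᵇ ℂ) x‖ ∂μ :=
            norm_integral_le_integral_norm _
        _ = ∫ x, ‖f x‖ * ‖(h : G →ᵇ ℂ) x‖ ∂μ := by simp [norm_mul]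
        _ ≤ ∫ x, ‖f x‖ * ‖h‖ ∂μ := by
            apply integral_mono ((integrable_mul_luc μ hf h).norm.congr ?_)
              (hf.norm.mul_const _)
            · intro x
              exact mul_le_mul_of_nonneg_left ((h : G →ᵇ ℂ).norm_coe_le_norm x)
                (norm_nonneg _)
            · filter_upwards with x
              simp [norm_mul]
        _ = (∫ x, ‖f x‖ ∂μ) * ‖h‖ := integral_mul_const _ _)

/-- An element of `LUC(G)*` given by a (complex) finite Radon measure, i.e. by a
linear combination of four finite inner-regular (w.r.t. compact sets) measures. -/
def IsRadonFunctional (m : LUCDual G) : Prop :=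
  ∃ μ : Fin 4 → Measure G, (∀ i, IsFiniteMeasure (μ i)) ∧ (∀ i, (μ i).InnerRegular) ∧
    ∀ f : ↥(LUC G), m f =
      ((∫ x, (f : G →ᵇ ℂ) x ∂(μ 0)) - ∫ x, (f : G →ᵇ ℂ) x ∂(μ 1))
        + Complex.I * ((∫ x, (f : G →ᵇ ℂ) x ∂(μ 2)) - ∫ x, (f : G →ᵇ ℂ) x ∂(μ 3))

/-- The convolution `f ∗ g (s) = ∫ f(st) g(t⁻¹) dμ(t)` of two functions. -/
def convFun (μ : Measure G) (f g : G → ℂ) : G → ℂ :=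
  fun s => ∫ t, f (s * t) * g t⁻¹ ∂μ

/-- Membership in the centre of the convolution algebra `L¹(G,μ)`. -/
def InCenterL1 (μ : Measure G) (h : G → ℂ) : Prop :=
  Integrable h μ ∧
    ∀ g : G → ℂ, Integrable g μ → convFun μ h g =ᵐ[μ] convFun μ g h

end MeasureStuff

/-!
Write `m_i ∗ n_i - m₀ ∗ n₀` at `f` as `(m_i - m₀)(r_{n_i} f) + m₀(r_{n_i} f - r_{n₀} f)`.
For `n` in a norm-bounded set and `f` in an equi-LUC set `F`, the functions `r_n f` are again
equi-LUC, so the first term is small uniformly in `f ∈ F`. For the second, the translates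
`ℓ_x f` with `x` in a compact set `K` and `f ∈ F` are equi-LUC, so `r_{n_i} f → r_{n₀} f`
uniformly on `K`, uniformly in `f ∈ F`, with a uniform norm bound; a finite Radon measure is
tight, hence continuous for uniform convergence on compact sets on norm-bounded sets.
-/

lemma mul_div_add_one_lt {a ε : ℝ} (ha : 0 ≤ a) (hε : 0 < ε) : a * (ε / (a + 1)) < ε := by
  rw [mul_div_assoc', div_lt_iff₀ (by positivity)]
  nlinarith

section CompactApproximation

variable {X E : Type*} [TopologicalSpace X] [MeasurableSpace X]
  [NormedAddCommGroup E] [NormedSpace ℝ E] [SecondCountableTopology E]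
  [MeasurableSpace E] [BorelSpace E]

lemma BoundedContinuousFunction.norm_integral_le_of_norm_le_on [OpensMeasurableSpace X]
    (μ : Measure X) [IsFiniteMeasure μ] (g : X →ᵇ E) {K : Set X} (hK : MeasurableSet K)
    {δ : ℝ} (hδ : ∀ x ∈ K, ‖g x‖ ≤ δ) :
    ‖∫ x, g x ∂μ‖ ≤ δ * μ.real K + ‖g‖ * μ.real Kᶜ := by
  rw [← integral_add_compl hK (g.integrable μ)]
  exact (norm_add_le _ _).trans (add_le_add
    (norm_setIntegral_le_of_norm_le_const (measure_lt_top μ K) hδ)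
    (norm_setIntegral_le_of_norm_le_const (measure_lt_top μ _) fun x _ => g.norm_coe_le_norm x))

lemma tendsto_integral_of_tendstoUniformlyOn_isCompact [BorelSpace X] [R1Space X]
    (μ : Measure X) [IsFiniteMeasure μ] [μ.InnerRegular] {κ : Type*} {l : Filter κ}
    {g : κ → X →ᵇ E} {M : ℝ} (hM : ∀ᶠ k in l, ‖g k‖ ≤ M)
    (hg : ∀ K, IsCompact K → TendstoUniformlyOn (fun k x => g k x) 0 l K) :
    Tendsto (fun k => ∫ x, g k x ∂μ) l (𝓝 0) := by
  rw [Metric.tendsto_nhds]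
  intro ε hε
  set η := ε / 2 / (|M| + 1)
  have hη : 0 < η := by positivity
  obtain ⟨K, -, hK, hKclosed, hKμ⟩ := MeasurableSet.univ.exists_isCompact_isClosed_sdiff_lt
    (measure_ne_top μ _) (ENNReal.ofReal_pos.2 hη).ne'
  have hKη : μ.real Kᶜ ≤ η := by
    rw [Set.compl_eq_univ_sdiff, measureReal_def]
    exact ENNReal.toReal_le_of_le_ofReal hη.le hKμ.le
  set δ := ε / 2 / (μ.real K + 1)
  have hδ : 0 < δ := by positivity
  filter_upwards [hM, Metric.tendstoUniformlyOn_iff.1 (hg K hK) δ hδ] with k hkM hkK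
  have hgK : ∀ x ∈ K, ‖g k x‖ ≤ δ := fun x hx => by simpa using (hkK x hx).le
  rw [dist_zero_right]
  calc ‖∫ x, g k x ∂μ‖ ≤ δ * μ.real K + ‖g k‖ * μ.real Kᶜ :=
        (g k).norm_integral_le_of_norm_le_on μ hKclosed.measurableSet hgK
    _ ≤ μ.real K * δ + |M| * η := by
        rw [mul_comm δ]
        gcongr
        exact hkM.trans (le_abs_self M)
    _ < ε / 2 + ε / 2 := add_lt_add (mul_div_add_one_lt measureReal_nonneg (half_pos hε))
        (mul_div_add_one_lt (abs_nonneg M) (half_pos hε))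
    _ = ε := add_halves ε

end CompactApproximation

section Convolution

variable {G : Type*} [Group G] [TopologicalSpace G] [IsTopologicalGroup G]

lemma IsRadonFunctional.tendsto_apply_of_tendstoUniformlyOn_isCompact
    [MeasurableSpace G] [BorelSpace G] {m : LUCDual G} (hm : IsRadonFunctional m)
    {κ : Type*} {l : Filter κ} {g : κ → LUC G} {M : ℝ} (hM : ∀ᶠ k in l, ‖g k‖ ≤ M)
    (hg : ∀ K, IsCompact K → TendstoUniformlyOn (fun k x => (g k : G →ᵇ ℂ) x) 0 l K) :
    Tendsto (fun k => m (g k)) l (𝓝 0) := by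
  obtain ⟨μ, hfin, hreg, hm⟩ := hm
  have hμ (j : Fin 4) : Tendsto (fun k => ∫ x, (g k : G →ᵇ ℂ) x ∂μ j) l (𝓝 0) :=
    haveI := hfin j
    haveI := hreg j
    tendsto_integral_of_tendstoUniformlyOn_isCompact (μ j) hM hg
  simp_rw [hm]
  simpa using ((hμ 0).sub (hμ 1)).add (((hμ 2).sub (hμ 3)).const_mul Complex.I)

lemma IsCompact.eventually_forall_conj_mem {K : Set G} (hK : IsCompact K) {V : Set G}
    (hV : V ∈ 𝓝 (1 : G)) : ∀ᶠ u in 𝓝 (1 : G), ∀ s ∈ K, s * u * s⁻¹ ∈ V :=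
  hK.eventually_forall_of_forall_eventually fun s _ =>
    (by fun_prop : Continuous fun z : G × G => z.2 * z.1 * z.2⁻¹).continuousAt.eventually_mem
      (by simpa using hV)

lemma norm_lTrans_sub_lTrans_le {f : LUC G} {U : Set G} {δ : ℝ}
    (hf : ∀ s t : G, s * t⁻¹ ∈ U → ‖(f : G →ᵇ ℂ) s - (f : G →ᵇ ℂ) t‖ < δ) {s t : G}
    (hst : s * t⁻¹ ∈ U) : ‖lTrans s f - lTrans t f‖ ≤ δ := by
  refine (BoundedContinuousFunction.norm_le ((norm_nonneg _).trans (hf s t hst).le)).2 fun x => ?_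
  have hx : s * x * (t * x)⁻¹ ∈ U := by simpa [mul_inv_rev, mul_assoc] using hst
  simpa using (hf _ _ hx).le

lemma EquiLUC.image2_rAct {B : Set (LUCDual G)} {C : ℝ} (hB : ∀ n ∈ B, ‖n‖ ≤ C)
    {F : Set (LUC G)} (hF : EquiLUC G F) : EquiLUC G (Set.image2 rAct B F) := by
  obtain ⟨⟨D, hD⟩, hFU⟩ := hF
  refine ⟨⟨C * D, ?_⟩, fun ε hε => ?_⟩
  · rintro _ ⟨n, hn, f, hf, rfl⟩
    exact (rAct_norm_le n f).trans
      (mul_le_mul (hB n hn) (hD f hf) (norm_nonneg _) ((norm_nonneg n).trans (hB n hn)))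
  obtain ⟨U, hU, hFU⟩ := hFU (ε / (|C| + 1)) (by positivity)
  refine ⟨U, hU, ?_⟩
  rintro _ ⟨n, hn, f, hf, rfl⟩ s t hst
  calc ‖(rAct n f : G →ᵇ ℂ) s - (rAct n f : G →ᵇ ℂ) t‖ = ‖n (lTrans s f - lTrans t f)‖ := by
        rw [map_sub]; rfl
    _ ≤ ‖n‖ * ‖lTrans s f - lTrans t f‖ := n.le_opNorm _
    _ ≤ |C| * (ε / (|C| + 1)) := mul_le_mul ((hB n hn).trans (le_abs_self C))
        (norm_lTrans_sub_lTrans_le (hFU f hf) hst) (norm_nonneg _) (abs_nonneg C)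
    _ < ε := mul_div_add_one_lt (abs_nonneg C) hε

lemma EquiLUC.image2_lTrans {K : Set G} (hK : IsCompact K) {F : Set (LUC G)}
    (hF : EquiLUC G F) : EquiLUC G (Set.image2 lTrans K F) := by
  obtain ⟨⟨D, hD⟩, hFU⟩ := hF
  refine ⟨⟨D, ?_⟩, fun ε hε => ?_⟩
  · rintro _ ⟨s, -, f, hf, rfl⟩
    exact (lTrans_norm_le s f).trans (hD f hf)
  obtain ⟨V, hV, hFV⟩ := hFU ε hε
  refine ⟨_, hK.eventually_forall_conj_mem hV, ?_⟩
  rintro _ ⟨a, ha, f, hf, rfl⟩ s t hst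
  have hconj : a * s * (a * t)⁻¹ ∈ V := by
    simpa [mul_inv_rev, mul_assoc] using hst a ha
  simpa using hFV f hf _ _ hconj

lemma IsRadonFunctional.uebTendsto_conv [MeasurableSpace G] [BorelSpace G] {m : LUCDual G}
    (hm : IsRadonFunctional m) {ι : Type*} {l : Filter ι} {n : ι → LUCDual G}
    {n₀ : LUCDual G} {C : ℝ} (hC : ∀ i, ‖n i‖ ≤ C) (hn : UEBTendsto G l n n₀) :
    UEBTendsto G l (fun i => conv m (n i)) (conv m n₀) := by
  intro F hF ε hε
  obtain ⟨D, hD⟩ := hF.1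
  -- Uniformity in `f ∈ F` is carried by the product filter `l ×ˢ 𝓟 F`.
  have hbdd : ∀ᶠ p in l ×ˢ 𝓟 F, ‖rAct (n p.1) p.2 - rAct n₀ p.2‖ ≤ (C + ‖n₀‖) * D := by
    refine eventually_prod_principal_iff.2 (Eventually.of_forall fun i f hf => ?_)
    calc ‖rAct (n i) f - rAct n₀ f‖ ≤ ‖n i‖ * ‖f‖ + ‖n₀‖ * ‖f‖ :=
          (norm_sub_le _ _).trans (add_le_add (rAct_norm_le _ _) (rAct_norm_le _ _))
      _ ≤ (C + ‖n₀‖) * D := by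
          rw [← add_mul]
          exact mul_le_mul (by linarith [hC i]) (hD f hf) (norm_nonneg _)
            (by linarith [(norm_nonneg (n i)).trans (hC i), norm_nonneg n₀])
  have hunif (K : Set G) (hK : IsCompact K) : TendstoUniformlyOn
      (fun p x => ((rAct (n p.1) p.2 - rAct n₀ p.2 : LUC G) : G →ᵇ ℂ) x) 0 (l ×ˢ 𝓟 F) K := by
    refine Metric.tendstoUniformlyOn_iff.2 fun δ hδ => eventually_prod_principal_iff.2 ?_
    filter_upwards [hn _ (hF.image2_lTrans hK) δ hδ] with i hi f hf x hx
    simpa [dist_eq_norm', map_sub] using hi _ (Set.mem_image2_of_mem hx hf)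
  have hlim := hm.tendsto_apply_of_tendstoUniformlyOn_isCompact hbdd hunif
  filter_upwards [eventually_prod_principal_iff.1 (Metric.tendsto_nhds.1 hlim ε hε)]
    with i hi f hf
  simpa [map_sub] using hi f hf

end Convolution

theorem conv_UEB_jointly_continuous_at_radon_general
    (G : Type*) [Group G] [TopologicalSpace G] [IsTopologicalGroup G]
    [MeasurableSpace G] [BorelSpace G]
    {ι : Type*} (l : Filter ι)
    (mα nα : ι → LUCDual G) (m₀ n₀ : LUCDual G)
    (B : Set (LUCDual G)) (hBbdd : ∃ C, ∀ n ∈ B, ‖n‖ ≤ C)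
    (hm₀ : IsRadonFunctional m₀) (hnB : ∀ i, nα i ∈ B)
    (hm : UEBTendsto G l mα m₀) (hn : UEBTendsto G l nα n₀) :
    UEBTendsto G l (fun i => conv (mα i) (nα i)) (conv m₀ n₀) := by
  obtain ⟨C, hC⟩ := hBbdd
  have hleft := hm₀.uebTendsto_conv (fun i => hC _ (hnB i)) hn
  intro F hF ε hε
  filter_upwards [hm _ (hF.image2_rAct hC) _ (half_pos hε), hleft F hF _ (half_pos hε)]
    with i hm_i hleft_i f hf
  calc ‖conv (mα i) (nα i) f - conv m₀ n₀ f‖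
      = ‖(mα i (rAct (nα i) f) - m₀ (rAct (nα i) f)) + (conv m₀ (nα i) f - conv m₀ n₀ f)‖ := by
        simp only [conv_apply]; ring_nf
    _ ≤ ‖mα i (rAct (nα i) f) - m₀ (rAct (nα i) f)‖ + ‖conv m₀ (nα i) f - conv m₀ n₀ f‖ :=
        norm_add_le _ _
    _ < ε / 2 + ε / 2 := add_lt_add (hm_i _ (Set.mem_image2_of_mem (hnB i) hf)) (hleft_i f hf)
    _ = ε := add_halves ε

/-- **Theorem (paper Thm 5.4, case (a)).** Convolution on `LUC(G)*` is jointly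
UEB continuous at `(m₀, n₀)` where `m₀ ∈ M(G)` and the right arguments stay in a
norm-bounded set `B`. -/
theorem conv_UEB_jointly_continuous_at_radon
    (G : Type*) [Group G] [TopologicalSpace G] [IsTopologicalGroup G]
    [MeasurableSpace G] [BorelSpace G]
    {ι : Type*} (l : Filter ι)
    (mα nα : ι → LUCDual G) (m₀ n₀ : LUCDual G)
    (B : Set (LUCDual G)) (hBbdd : ∃ C, ∀ n ∈ B, ‖n‖ ≤ C)
    (hm₀ : IsRadonFunctional m₀) (hn₀ : n₀ ∈ B) (hnB : ∀ i, nα i ∈ B)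
    (hm : UEBTendsto G l mα m₀) (hn : UEBTendsto G l nα n₀) :
    UEBTendsto G l (fun i => conv (mα i) (nα i)) (conv m₀ n₀) :=
  conv_UEB_jointly_continuous_at_radon_general G l mα nα m₀ n₀ B hBbdd hm₀ hnB hm hn
end
end

section
/- Let G be the group of increasing homeomorphisms of the interval [0,3] onto itself, with composition as the group operation and with the topology induced by the right-invariant metric Δ(x,y) = sup_{t∈[0,3]} |x(t) − y(t)|. Then the convolution map (m, n) ↦ m ∗ n on LUC(G)* is not jointly continuous on norm-bounded subsets of LUC(G)* in the UEB topology. -/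
noncomputable section
set_option linter.unusedSectionVars false

open Filter Topology MeasureTheory BoundedContinuousFunction

section HomeoGroup

/-- The unit interval `[0,3]` as a compact metric space. -/
abbrev II := ↥(Set.Icc (0:ℝ) 3)

/-- The group of self-homeomorphisms of `[0,3]`, with composition as multiplication. -/
instance : Group (II ≃ₜ II) where
  mul f g := g.trans f
  one := Homeomorph.refl II
  inv := Homeomorph.symm
  mul_assoc a b c := Homeomorph.ext fun x => rfl
  one_mul a := Homeomorph.ext fun x => rfl
  mul_one a := Homeomorph.ext fun x => rfl
  inv_mul_cancel a := Homeomorph.ext fun x => a.symm_apply_apply x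

@[simp] lemma homeoMul_apply (a b : II ≃ₜ II) (x : II) : (a * b) x = a (b x) := rfl

@[simp] lemma homeoInv_apply (a : II ≃ₜ II) (x : II) : a⁻¹ x = a.symm x := rfl

/-- The group of increasing homeomorphisms of `[0,3]` onto itself. -/
def IncHomeo : Subgroup (II ≃ₜ II) where
  carrier := {φ | StrictMono φ}
  one_mem' := fun _ _ h => h
  mul_mem' := fun {a b} ha hb x y h => ha (hb h)
  inv_mem' := fun {a} ha x y hxy => by
    rcases lt_trichotomy (a.symm x) (a.symm y) with h | h | h
    · exact h
    · exfalso
      have hxyeq : x = y := by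
        have := congrArg a h
        simpa using this
      exact lt_irrefl x (hxyeq ▸ hxy)
    · exfalso
      have h2 : y < x := by
        have := ha h
        simpa using this
      exact lt_asymm hxy h2

/-- An increasing homeomorphism of `[0,3]`, as a continuous map. -/
def toCM (φ : ↥IncHomeo) : C(II, II) :=
  ⟨⇑(φ : II ≃ₜ II), (φ : II ≃ₜ II).continuous⟩

lemma toCM_injective : Function.Injective toCM := by
  intro f g h
  apply Subtype.ext
  apply Homeomorph.ext
  intro x
  exact ContinuousMap.congr_fun h x

/-- The metric `Δ(x,y) = sup_{t ∈ [0,3]} |x(t) - y(t)|` on the group of increasing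
homeomorphisms of `[0,3]` (the sup metric, pulled back from `C([0,3],[0,3])`). -/
instance : MetricSpace ↥IncHomeo := MetricSpace.induced toCM toCM_injective inferInstance

lemma IncHomeo.dist_eq (φ ψ : ↥IncHomeo) : dist φ ψ = dist (toCM φ) (toCM ψ) := rfl

/-- The group of increasing homeomorphisms of `[0,3]` with the sup metric is a
topological group. -/
instance : IsTopologicalGroup ↥IncHomeo where
  continuous_mul := by
    rw [Metric.continuous_iff]
    rintro ⟨x₀, y₀⟩ ε hε
    have hx₀ : UniformContinuous fun t : II => (x₀ : II ≃ₜ II) t :=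
      CompactSpace.uniformContinuous_of_continuous (x₀ : II ≃ₜ II).continuous
    rw [Metric.uniformContinuous_iff] at hx₀
    obtain ⟨δ, hδpos, hδ⟩ := hx₀ (ε / 2) (by linarith)
    refine ⟨min δ (ε / 2), by positivity, ?_⟩
    rintro ⟨x, y⟩ hdist
    rw [Prod.dist_eq] at hdist
    have h1 : dist x x₀ < min δ (ε / 2) := (le_max_left _ _).trans_lt hdist
    have h2 : dist y y₀ < min δ (ε / 2) := (le_max_right _ _).trans_lt hdist
    show dist (x * y) (x₀ * y₀) < ε
    rw [IncHomeo.dist_eq, ContinuousMap.dist_lt_iff hε]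
    intro t
    show dist ((x : II ≃ₜ II) ((y : II ≃ₜ II) t)) ((x₀ : II ≃ₜ II) ((y₀ : II ≃ₜ II) t)) < ε
    have hb1 : dist ((x : II ≃ₜ II) ((y : II ≃ₜ II) t)) ((x₀ : II ≃ₜ II) ((y : II ≃ₜ II) t))
        < ε / 2 := by
      calc dist ((x : II ≃ₜ II) ((y : II ≃ₜ II) t)) ((x₀ : II ≃ₜ II) ((y : II ≃ₜ II) t))
          ≤ dist (toCM x) (toCM x₀) :=
            ContinuousMap.dist_apply_le_dist (f := toCM x) (g := toCM x₀) _
        _ = dist x x₀ := rfl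
        _ < ε / 2 := h1.trans_le (min_le_right _ _)
    have hb2 : dist ((x₀ : II ≃ₜ II) ((y : II ≃ₜ II) t)) ((x₀ : II ≃ₜ II) ((y₀ : II ≃ₜ II) t))
        < ε / 2 := by
      apply hδ
      calc dist ((y : II ≃ₜ II) t) ((y₀ : II ≃ₜ II) t)
          ≤ dist (toCM y) (toCM y₀) :=
            ContinuousMap.dist_apply_le_dist (f := toCM y) (g := toCM y₀) _
        _ = dist y y₀ := rfl
        _ < δ := h2.trans_le (min_le_left _ _)
    calc dist ((x : II ≃ₜ II) ((y : II ≃ₜ II) t)) ((x₀ : II ≃ₜ II) ((y₀ : II ≃ₜ II) t))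
        ≤ dist ((x : II ≃ₜ II) ((y : II ≃ₜ II) t)) ((x₀ : II ≃ₜ II) ((y : II ≃ₜ II) t))
          + dist ((x₀ : II ≃ₜ II) ((y : II ≃ₜ II) t)) ((x₀ : II ≃ₜ II) ((y₀ : II ≃ₜ II) t)) :=
          dist_triangle _ _ _
      _ < ε / 2 + ε / 2 := add_lt_add hb1 hb2
      _ = ε := by ring
  continuous_inv := by
    rw [Metric.continuous_iff]
    intro x₀ ε hε
    have hx₀ : UniformContinuous fun t : II => (x₀ : II ≃ₜ II).symm t :=
      CompactSpace.uniformContinuous_of_continuous (x₀ : II ≃ₜ II).symm.continuous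
    rw [Metric.uniformContinuous_iff] at hx₀
    obtain ⟨δ, hδpos, hδ⟩ := hx₀ ε hε
    refine ⟨δ, hδpos, ?_⟩
    intro x hx
    show dist x⁻¹ x₀⁻¹ < ε
    rw [IncHomeo.dist_eq, ContinuousMap.dist_lt_iff hε]
    intro t
    show dist ((x : II ≃ₜ II).symm t) ((x₀ : II ≃ₜ II).symm t) < ε
    have e1 : (x : II ≃ₜ II).symm t
        = (x₀ : II ≃ₜ II).symm ((x₀ : II ≃ₜ II) ((x : II ≃ₜ II).symm t)) :=
      ((x₀ : II ≃ₜ II).symm_apply_apply _).symm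
    rw [e1]
    apply hδ
    have e2 : t = (x : II ≃ₜ II) ((x : II ≃ₜ II).symm t) :=
      ((x : II ≃ₜ II).apply_symm_apply t).symm
    calc dist ((x₀ : II ≃ₜ II) ((x : II ≃ₜ II).symm t)) t
        = dist ((x₀ : II ≃ₜ II) ((x : II ≃ₜ II).symm t))
            ((x : II ≃ₜ II) ((x : II ≃ₜ II).symm t)) := by rw [← e2]
      _ ≤ dist (toCM x₀) (toCM x) :=
            ContinuousMap.dist_apply_le_dist (f := toCM x₀) (g := toCM x) _
      _ = dist x x₀ := dist_comm _ _
      _ < δ := hx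

end HomeoGroup

/-! Let `m` be a weak-* cluster point (Banach–Alaoglu, along a free ultrafilter) of the Dirac
measures at a sequence `x_k`, and let `y_j → 1` in `G`, so that `δ_{y_j} → δ_1` in the UEB
topology. Joint continuity would force `m ∗ δ_{y_j} → m ∗ δ_1 = m`. Test this against
`f(x) = x(1)`: each `x_k` stretches `[1 - 1/(k+2), 1]` onto `[1, 2]`, so `m(f) = lim x_k(1) = 2`,
whereas `y_j` moves `1` down to `1 - 1/(j+2)`, so `(m ∗ δ_{y_j})(f) = lim_k x_k(y_j(1)) ≤ 1`. -/

theorem StrongDual.exists_tendsto_ultrafilter {𝕜 E ι : Type*} [NontriviallyNormedField 𝕜]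
    [ProperSpace 𝕜] [SeminormedAddCommGroup E] [NormedSpace 𝕜 E] (𝒰 : Ultrafilter ι)
    (φ : ι → StrongDual 𝕜 E) {r : ℝ} (hφ : ∀ i, ‖φ i‖ ≤ r) :
    ∃ m : StrongDual 𝕜 E, ∀ x, Tendsto (fun i => φ i x) 𝒰 (𝓝 (m x)) := by
  have hball : ↑(𝒰.map (StrongDual.toWeakDual ∘ φ)) ≤
      𝓟 (WeakDual.toStrongDual ⁻¹' Metric.closedBall (0 : StrongDual 𝕜 E) r) := by
    rw [Ultrafilter.coe_map, le_principal_iff]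
    exact mem_map.2 (univ_mem' fun i => by simpa using hφ i)
  obtain ⟨m, -, hm⟩ := (WeakDual.isCompact_closedBall 0 r).ultrafilter_le_nhds _ hball
  exact ⟨WeakDual.toStrongDual m, fun x => ((WeakDual.eval_continuous x).tendsto m).comp hm⟩

section LUCDual

variable {G : Type*} [Group G] [TopologicalSpace G] [IsTopologicalGroup G]

def LUC.ofIsLUCFun (f : G → ℂ) (hf : IsLUCFun G f) : ↥(LUC G) :=
  ⟨ofNormedAddCommGroup f (luccond_continuous hf.2) hf.1.choose hf.1.choose_spec, hf.2⟩

@[simp] lemma LUC.ofIsLUCFun_apply (f : G → ℂ) (hf : IsLUCFun G f) (s : G) :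
    ((LUC.ofIsLUCFun f hf : ↥(LUC G)) : G →ᵇ ℂ) s = f s := rfl

lemma LUC.norm_apply_le (f : ↥(LUC G)) (s : G) : ‖(f : G →ᵇ ℂ) s‖ ≤ ‖f‖ :=
  (f : G →ᵇ ℂ).norm_coe_le_norm s

def dirac (y : G) : LUCDual G := (evalCLM ℂ y).comp (LUC G).subtypeL

@[simp] lemma dirac_apply (y : G) (f : ↥(LUC G)) : dirac y f = (f : G →ᵇ ℂ) y := rfl

lemma norm_dirac_le (y : G) : ‖dirac y‖ ≤ 1 :=
  ContinuousLinearMap.opNorm_le_bound _ zero_le_one fun f => by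
    rw [one_mul]
    exact LUC.norm_apply_le f y

lemma rAct_dirac_apply (y : G) (f : ↥(LUC G)) (s : G) :
    ((rAct (dirac y) f : ↥(LUC G)) : G →ᵇ ℂ) s = (f : G →ᵇ ℂ) (s * y) := rfl

lemma conv_dirac_one (m : LUCDual G) : conv m (dirac 1) = m := by
  ext f
  have hf : rAct (dirac 1) f = f := Subtype.ext <| BoundedContinuousFunction.ext fun s => by
    rw [rAct_dirac_apply, mul_one]
  rw [conv_apply, hf]

lemma equiLUC_singleton (f : ↥(LUC G)) : EquiLUC G {f} := by
  refine ⟨⟨‖f‖, fun g hg => (congrArg norm (Set.mem_singleton_iff.1 hg)).le⟩, fun ε hε => ?_⟩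
  obtain ⟨U, hU, hf⟩ := f.2 ε hε
  exact ⟨U, hU, fun g hg => Set.mem_singleton_iff.1 hg ▸ hf⟩

lemma tendsto_UEBTop_iff {ι : Type*} (l : Filter ι) (μ : ι → LUCDual G) (μ₀ : LUCDual G) :
    Tendsto μ l (@nhds _ (UEBTop G) μ₀) ↔ UEBTendsto G l μ μ₀ := by
  rw [UEBTop, nhds_iInf, tendsto_iInf, UEBTendsto, Subtype.forall]
  refine forall₂_congr fun F _ => ?_
  rw [nhds_induced, tendsto_comap_iff, UniformFun.tendsto_iff_tendstoUniformly,
    Metric.tendstoUniformly_iff]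
  refine forall₂_congr fun ε _ => eventually_congr (Eventually.of_forall fun i => ?_)
  rw [Subtype.forall]
  exact forall₂_congr fun f _ => by rw [dist_comm, dist_eq_norm]; rfl

lemma UEBTendsto.tendsto_apply {ι : Type*} {l : Filter ι} {μ : ι → LUCDual G} {μ₀ : LUCDual G}
    (h : UEBTendsto G l μ μ₀) (f : ↥(LUC G)) : Tendsto (fun i => μ i f) l (𝓝 (μ₀ f)) := by
  rw [tendsto_iff_norm_sub_tendsto_zero, Metric.tendsto_nhds]
  intro ε hε
  filter_upwards [h {f} (equiLUC_singleton f) ε hε] with i hi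
  simpa using hi f rfl

lemma Filter.Tendsto.uebTendsto_dirac {ι : Type*} {l : Filter ι} {y : ι → G} {y₀ : G}
    (hy : Tendsto y l (𝓝 y₀)) : UEBTendsto G l (fun i => dirac (y i)) (dirac y₀) := by
  intro F hF ε hε
  obtain ⟨U, hU, hFU⟩ := hF.2 ε hε
  have hy' : Tendsto (fun i => y i * y₀⁻¹) l (𝓝 1) := by
    simpa using hy.mul_const y₀⁻¹
  filter_upwards [hy' hU] with i hi f hf
  exact hFU f hf _ _ hi

end LUCDual

namespace IncHomeo

lemma dist_apply_le (φ ψ : ↥IncHomeo) (t : II) :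
    dist ((φ : II ≃ₜ II) t) ((ψ : II ≃ₜ II) t) ≤ dist φ ψ :=
  ContinuousMap.dist_apply_le_dist (f := toCM φ) (g := toCM ψ) t

lemma dist_apply_le_dist_mul_inv_one (φ ψ : ↥IncHomeo) (t : II) :
    dist ((φ : II ≃ₜ II) t) ((ψ : II ≃ₜ II) t) ≤ dist (φ * ψ⁻¹) 1 := by
  simpa using dist_apply_le (φ * ψ⁻¹) 1 ((ψ : II ≃ₜ II) t)

lemma dist_one_le {φ : ↥IncHomeo} {C : ℝ} (hC : 0 ≤ C)
    (h : ∀ t : II, |((φ : II ≃ₜ II) t : ℝ) - t| ≤ C) : dist φ 1 ≤ C :=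
  (ContinuousMap.dist_le hC).2 fun t => h t

def ofStrictMono (f : ℝ → ℝ) (hm : StrictMono f) (hc : Continuous f) (h0 : f 0 = 0)
    (h3 : f 3 = 3) : ↥IncHomeo :=
  have hmaps : Set.MapsTo f (Set.Icc 0 3) (Set.Icc 0 3) := by
    simpa only [h0, h3] using hm.monotone.mapsTo_Icc (a := 0) (b := 3)
  have hsurj : Function.Surjective (hmaps.restrict f _ _) :=
    hmaps.restrict_surjective_iff.2 <| by
      simpa only [h0, h3] using
        hc.continuousOn.surjOn_Icc (s := Set.Icc (0 : ℝ) 3) (a := 0) (b := 3)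
          (by norm_num) (by norm_num)
  let e := StrictMono.orderIsoOfSurjective (hmaps.restrict f _ _) (fun _ _ h => hm h) hsurj
  ⟨e.toHomeomorph, e.strictMono⟩

@[simp] lemma ofStrictMono_apply (f : ℝ → ℝ) (hm : StrictMono f) (hc : Continuous f)
    (h0 : f 0 = 0) (h3 : f 3 = 3) (t : II) :
    (((ofStrictMono f hm hc h0 h3 : ↥IncHomeo) : II ≃ₜ II) t : ℝ) = f t := rfl

lemma isLUCFun_eval (p : II) : IsLUCFun ↥IncHomeo fun φ => (((φ : II ≃ₜ II) p : ℝ) : ℂ) := by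
  refine ⟨⟨3, fun φ => ?_⟩, fun ε hε => ⟨Metric.ball 1 ε, Metric.ball_mem_nhds _ hε, ?_⟩⟩
  · have h := ((φ : II ≃ₜ II) p).2
    rw [Complex.norm_real, Real.norm_eq_abs, abs_le]
    exact ⟨by linarith [h.1], h.2⟩
  · intro φ ψ hφψ
    rw [← Complex.ofReal_sub, Complex.norm_real, ← dist_eq_norm, ← Subtype.dist_eq]
    exact (dist_apply_le_dist_mul_inv_one φ ψ p).trans_lt hφψ

def evalLUC (p : II) : ↥(LUC ↥IncHomeo) := LUC.ofIsLUCFun _ (isLUCFun_eval p)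

@[simp] lemma evalLUC_apply (p : II) (φ : ↥IncHomeo) :
    ((evalLUC p : ↥(LUC ↥IncHomeo)) : ↥IncHomeo →ᵇ ℂ) φ = (((φ : II ≃ₜ II) p : ℝ) : ℂ) := rfl

end IncHomeo

section Example

/-- The piecewise linear map with nodes `(0,0)`, `(1,1-ε)`, `(3,3)`. -/
def yFun (ε t : ℝ) : ℝ := max ((1 - ε) * t) (3 + (1 + ε / 2) * (t - 3))

/-- The piecewise linear map with nodes `(0,0)`, `(1-δ,1)`, `(1,2)`, `(3,3)`. -/
def xFun (δ t : ℝ) : ℝ := min (max (t / (1 - δ)) (2 + (t - 1) / δ)) ((t + 3) / 2)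

variable {ε δ : ℝ}

lemma yFun_strictMono (hε₀ : 0 ≤ ε) (hε₁ : ε < 1) : StrictMono (yFun ε) := fun a b hab =>
  max_lt_max (by nlinarith) (by nlinarith)

lemma continuous_yFun (ε : ℝ) : Continuous (yFun ε) := by
  unfold yFun; fun_prop

lemma yFun_zero (hε : 0 ≤ ε) : yFun ε 0 = 0 := by
  unfold yFun; rw [max_eq_left (by linarith)]; ring

lemma yFun_three (hε : 0 ≤ ε) : yFun ε 3 = 3 := by
  unfold yFun; rw [max_eq_right (by linarith)]; ring

lemma yFun_one (ε : ℝ) : yFun ε 1 = 1 - ε := by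
  unfold yFun; rw [max_eq_left (by linarith)]; ring

lemma abs_yFun_sub_le (hε : 0 ≤ ε) {t : ℝ} (ht : t ∈ Set.Icc (0 : ℝ) 3) :
    |yFun ε t - t| ≤ 3 * ε := by
  obtain ⟨ht₀, ht₃⟩ := ht
  rw [abs_le, yFun]
  constructor
  · nlinarith [le_max_left ((1 - ε) * t) (3 + (1 + ε / 2) * (t - 3))]
  · linarith [max_le (show (1 - ε) * t ≤ t + 3 * ε by nlinarith)
      (show 3 + (1 + ε / 2) * (t - 3) ≤ t + 3 * ε by nlinarith)]

lemma xFun_strictMono (hδ₀ : 0 < δ) (hδ₁ : δ < 1) : StrictMono (xFun δ) := fun a b hab => by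
  have h₁ : 0 < 1 - δ := by linarith
  exact min_lt_min (max_lt_max (div_lt_div_of_pos_right hab h₁)
    (by gcongr)) (by linarith)

lemma continuous_xFun (δ : ℝ) : Continuous (xFun δ) := by
  unfold xFun; fun_prop

lemma xFun_zero (hδ₀ : 0 < δ) (hδ : δ ≤ 1 / 2) : xFun δ 0 = 0 := by
  have h : 2 + (0 - 1) / δ ≤ 0 := by
    have : 2 ≤ 1 / δ := by rw [le_div_iff₀ hδ₀]; linarith
    rw [zero_sub, neg_div]; linarith
  rw [xFun, zero_div, max_eq_left h, min_eq_left (by norm_num)]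

lemma xFun_three (hδ₀ : 0 < δ) (hδ₁ : δ < 1) : xFun δ 3 = 3 := by
  have h : 3 ≤ 3 / (1 - δ) := by
    rw [le_div_iff₀ (by linarith)]; linarith
  rw [xFun, min_eq_right (le_max_of_le_left (by linarith))]
  norm_num

lemma xFun_one (hδ : δ ≤ 1 / 2) : xFun δ 1 = 2 := by
  have h : 1 / (1 - δ) ≤ 2 := by
    rw [div_le_iff₀ (by linarith)]; linarith
  rw [xFun, sub_self, zero_div, add_zero, max_eq_right h, min_eq_left (by norm_num)]

lemma xFun_one_sub_le (hδ₀ : 0 < δ) (hδε : δ ≤ ε) (hε : ε < 1) : xFun δ (1 - ε) ≤ 1 := by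
  refine (min_le_left _ _).trans (max_le ?_ ?_)
  · rw [div_le_one (by linarith)]; linarith
  · have : ε / δ ≥ 1 := by rw [ge_iff_le, le_div_iff₀ hδ₀]; linarith
    rw [show 1 - ε - 1 = -ε by ring, neg_div]; linarith

def gap (n : ℕ) : ℝ := 1 / (n + 2)

lemma gap_pos (n : ℕ) : 0 < gap n := by
  unfold gap; positivity

lemma gap_le_half (n : ℕ) : gap n ≤ 1 / 2 := by
  unfold gap; gcongr; linarith [n.cast_nonneg (α := ℝ)]

lemma gap_lt_one (n : ℕ) : gap n < 1 := (gap_le_half n).trans_lt (by norm_num)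

lemma gap_antitone : Antitone gap := fun m n hmn => by
  unfold gap; gcongr

lemma tendsto_gap : Tendsto gap atTop (𝓝 0) :=
  tendsto_const_nhds.div_atTop (tendsto_natCast_atTop_atTop.atTop_add tendsto_const_nhds)

def ySeq (j : ℕ) : ↥IncHomeo :=
  IncHomeo.ofStrictMono (yFun (gap j)) (yFun_strictMono (gap_pos j).le (gap_lt_one j))
    (continuous_yFun _) (yFun_zero (gap_pos j).le) (yFun_three (gap_pos j).le)

def xSeq (k : ℕ) : ↥IncHomeo :=
  IncHomeo.ofStrictMono (xFun (gap k)) (xFun_strictMono (gap_pos k) (gap_lt_one k))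
    (continuous_xFun _) (xFun_zero (gap_pos k) (gap_le_half k))
    (xFun_three (gap_pos k) (gap_lt_one k))

def pointOne : II := ⟨1, by norm_num⟩

lemma xSeq_apply_pointOne (k : ℕ) : ((xSeq k : II ≃ₜ II) pointOne : ℝ) = 2 :=
  xFun_one (gap_le_half k)

lemma xSeq_apply_ySeq_apply_pointOne_le {j k : ℕ} (hjk : j ≤ k) :
    ((xSeq k : II ≃ₜ II) ((ySeq j : II ≃ₜ II) pointOne) : ℝ) ≤ 1 := by
  have hy : ((ySeq j : II ≃ₜ II) pointOne : ℝ) = 1 - gap j := yFun_one _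
  rw [xSeq, IncHomeo.ofStrictMono_apply, hy]
  exact xFun_one_sub_le (gap_pos k) (gap_antitone hjk) (gap_lt_one j)

lemma tendsto_ySeq : Tendsto ySeq atTop (𝓝 1) := by
  rw [tendsto_iff_dist_tendsto_zero]
  refine squeeze_zero (fun _ => dist_nonneg) (fun j => IncHomeo.dist_one_le
    (by linarith [gap_pos j]) fun t => abs_yFun_sub_le (gap_pos j).le t.2) ?_
  simpa using tendsto_gap.const_mul 3

end Example

/-- **(paper, Example in Section 5).** For `G` the group of increasing homeomorphisms
of `[0,3]` (with composition, and the topology of the right-invariant sup metric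
`Δ(x,y) = sup_t |x(t) - y(t)|`), convolution on `LUC(G)*` is *not* jointly
continuous on norm-bounded sets in the UEB topology. -/
theorem conv_not_UEB_jointly_continuous_on_bounded_IncHomeo :
    ¬ ∀ B₁ B₂ : Set (LUCDual ↥IncHomeo),
        (∃ C, ∀ m ∈ B₁, ‖m‖ ≤ C) → (∃ C, ∀ m ∈ B₂, ‖m‖ ≤ C) →
        @ContinuousOn (LUCDual ↥IncHomeo × LUCDual ↥IncHomeo) (LUCDual ↥IncHomeo)
          (@instTopologicalSpaceProd _ _ (UEBTop ↥IncHomeo) (UEBTop ↥IncHomeo))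
          (UEBTop ↥IncHomeo)
          (fun p => conv p.1 p.2) (B₁ ×ˢ B₂) := by
  intro hcont
  let _ : TopologicalSpace (LUCDual ↥IncHomeo) := UEBTop ↥IncHomeo
  obtain ⟨m, hm⟩ := StrongDual.exists_tendsto_ultrafilter (hyperfilter ℕ)
    (fun k => dirac (xSeq k)) fun k => norm_dirac_le _
  set f := IncHomeo.evalLUC pointOne
  have hmf : m f = 2 := tendsto_nhds_unique (hm f) <| by
    simp [f, xSeq_apply_pointOne]
  have hconv_le (j : ℕ) : (conv m (dirac (ySeq j)) f).re ≤ 1 := by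
    refine le_of_tendsto ((Complex.continuous_re.tendsto _).comp (hm _)) ?_
    filter_upwards [hyperfilter_le_cofinite (Nat.cofinite_eq_atTop ▸ eventually_ge_atTop j)]
      with k hjk
    simpa [f, rAct_dirac_apply] using xSeq_apply_ySeq_apply_pointOne_le hjk
  set B₂ := insert (dirac 1) (Set.range fun j => dirac (ySeq j))
  have hB₂ : ∃ C, ∀ n ∈ B₂, ‖n‖ ≤ C := ⟨1, by simp [B₂, norm_dirac_le]⟩
  have hlim : Tendsto (fun j => conv m (dirac (ySeq j))) atTop (𝓝 (conv m (dirac 1))) :=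
    (hcont {m} B₂ ⟨‖m‖, by simp⟩ hB₂ (m, dirac 1) ⟨rfl, Set.mem_insert _ _⟩).tendsto.comp <|
      tendsto_nhdsWithin_iff.2 ⟨tendsto_const_nhds.prodMk_nhds
        ((tendsto_UEBTop_iff _ _ _).2 tendsto_ySeq.uebTendsto_dirac),
        Eventually.of_forall fun j => ⟨rfl, Set.mem_insert_of_mem _ ⟨j, rfl⟩⟩⟩
  rw [conv_dirac_one] at hlim
  have hre := (Complex.continuous_re.tendsto _).comp
    (((tendsto_UEBTop_iff _ _ _).1 hlim).tendsto_apply f)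
  rw [hmf] at hre
  linarith [le_of_tendsto' hre hconv_le, show (2 : ℂ).re = 2 from rfl]
end
end
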